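/- Let H be a real inner product space, λ > 0, and let L_1, …, L_{mα} : H → ℝ be convex differentiable loss terms. Let f minimize g ↦ (1/(mn)) Σ_{j=1}^{mα} L_j(g) + (λ/2)‖g‖² and let f^{∖i′} minimize the same objective with the i′-th term L_{i′} omitted. Suppose L_{i′}(g) = Σ_{k=1}^{n′} c_k(E_k(g)) with n′ = n/α, where each c_k : ℝ → ℝ is τ-Lipschitz and each E_k : H → ℝ is ρ-admissible at the mini-sample input x′_{i′}, and suppose ‖x′_{i′}‖ ≤ nv√d/α. Then for every evaluation functional E that is ρ-admissible at a test input x with ‖x‖ ≤ nv√d, it holds that |E(f) − E(f^{∖i′})| ≤ dτρ²v²n²/(mλα²); that is, the function stability Δ of f under removal of one mini-sample is bounded by dτρ²v²n²/(mλα²). -/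

import Mathlib

/-!
Adding the `λ/2 ‖·‖²` regulariser makes both objectives `λ`-strongly convex, so each minimiser
beats every other point by `λ/2` times the squared distance. Adding the two resulting
inequalities for `f` and `f^{∖i′}` cancels everything except the removed mini-sample loss,
giving `λ ‖f - f^{∖i′}‖² ≤ (L_{i′}(f^{∖i′}) - L_{i′}(f)) / (mn)`. The removed loss is a sum of
`n/α` terms `c_k ∘ E_k`, each `τρ‖x′‖`-Lipschitz, hence `‖f - f^{∖i′}‖ ≤ τρ‖x′‖/(mαλ)`;
admissibility of the test functional and the two feature bounds finish the estimate.
-/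

open Set Finset Filter Topology

theorem ConvexOn.finset_sum {ι E : Type*} [AddCommGroup E] [Module ℝ E] {s : Set E}
    (hs : Convex ℝ s) (t : Finset ι) {f : ι → E → ℝ} (hf : ∀ i ∈ t, ConvexOn ℝ s (f i)) :
    ConvexOn ℝ s fun x ↦ ∑ i ∈ t, f i x := by
  classical
  induction t using Finset.induction with
  | empty => simpa using convexOn_const 0 hs
  | insert i t hi ih =>
    simp only [sum_insert hi]
    exact (hf i (mem_insert_self i t)).add (ih fun j hj ↦ hf j (mem_insert_of_mem hj))

theorem ConvexOn.strongConvexOn_add_sq_norm {E : Type*} [NormedAddCommGroup E]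
    [InnerProductSpace ℝ E] {s : Set E} {f : E → ℝ} (hf : ConvexOn ℝ s f) (m : ℝ) :
    StrongConvexOn s m fun x ↦ f x + m / 2 * ‖x‖ ^ 2 :=
  strongConvexOn_iff_convex.2 (by simpa using hf)

theorem StrongConvexOn.add_sq_norm_sub_le_of_isMinOn {E : Type*} [NormedAddCommGroup E]
    [NormedSpace ℝ E] {s : Set E} {m : ℝ} {f : E → ℝ} {a b : E} (hf : StrongConvexOn s m f)
    (hmin : IsMinOn f s a) (ha : a ∈ s) (hb : b ∈ s) :
    f a + m / 2 * ‖b - a‖ ^ 2 ≤ f b := by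
  -- compare `f a` with `f` at `t • b + (1 - t) • a` and let `t → 0⁺`
  have hsegment : ∀ t ∈ Ioo (0 : ℝ) 1, f a + (1 - t) * (m / 2 * ‖b - a‖ ^ 2) ≤ f b := by
    rintro t ⟨ht0, ht1⟩
    have hconv := hf.2 hb ha ht0.le (sub_nonneg.2 ht1.le) (add_sub_cancel t 1)
    have hle := isMinOn_iff.1 hmin _ (hf.1 hb ha ht0.le (sub_nonneg.2 ht1.le) (add_sub_cancel t 1))
    simp only [smul_eq_mul] at hconv
    have : t * (f a + (1 - t) * (m / 2 * ‖b - a‖ ^ 2)) ≤ t * f b := by linarith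
    exact le_of_mul_le_mul_left this ht0
  have hlim : Tendsto (fun t : ℝ ↦ f a + (1 - t) * (m / 2 * ‖b - a‖ ^ 2)) (𝓝[>] 0)
      (𝓝 (f a + m / 2 * ‖b - a‖ ^ 2)) :=
    tendsto_nhdsWithin_of_tendsto_nhds <| (by fun_prop : Continuous _).tendsto' 0 _ (by simp)
  exact le_of_tendsto hlim (eventually_of_mem (Ioo_mem_nhdsGT one_pos) hsegment)

theorem norm_sub_le_of_isMinOn_regularized {H : Type*} [NormedAddCommGroup H]
    [InnerProductSpace ℝ H] {R ℓ : H → ℝ} {lam K : ℝ} {f f' : H}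
    (hR : ConvexOn ℝ univ R) (hℓ : ConvexOn ℝ univ ℓ) (hlam : 0 < lam) (hK : 0 ≤ K)
    (hℓK : ∀ g g', ℓ g - ℓ g' ≤ K * ‖g - g'‖)
    (hf : IsMinOn (fun g ↦ R g + ℓ g + lam / 2 * ‖g‖ ^ 2) univ f)
    (hf' : IsMinOn (fun g ↦ R g + lam / 2 * ‖g‖ ^ 2) univ f') :
    ‖f - f'‖ ≤ K / lam := by
  have hgrowth := ((hR.add hℓ).strongConvexOn_add_sq_norm lam).add_sq_norm_sub_le_of_isMinOn
    hf (mem_univ f) (mem_univ f')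
  have hgrowth' := (hR.strongConvexOn_add_sq_norm lam).add_sq_norm_sub_le_of_isMinOn
    hf' (mem_univ f') (mem_univ f)
  simp only [Pi.add_apply, norm_sub_rev f' f] at hgrowth hgrowth'
  have hsq : ‖f - f'‖ * lam * ‖f - f'‖ ≤ K * ‖f - f'‖ := by
    nlinarith [hℓK f' f, norm_sub_rev f' f]
  rw [le_div_iff₀ hlam]
  rcases (norm_nonneg (f - f')).eq_or_lt with h0 | h0
  · simpa [← h0] using hK
  · exact le_of_mul_le_mul_right hsq h0

/-- `ρ`-admissibility at an input `x`, which enters only through its norm `x`. -/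
def IsAdmissible {H : Type*} [SeminormedAddCommGroup H] (ρ x : ℝ) (E : H → ℝ) : Prop :=
  ∀ g g', |E g - E g'| ≤ ρ * ‖g - g'‖ * x

theorem abs_sum_comp_sub_sum_comp_le {ι H : Type*} [Fintype ι] [SeminormedAddCommGroup H]
    {τ ρ x : ℝ} (c : ι → ℝ → ℝ) (E : ι → H → ℝ) (hτ : 0 ≤ τ)
    (hc : ∀ k a b, |c k a - c k b| ≤ τ * |a - b|) (hE : ∀ k, IsAdmissible ρ x (E k)) (g g' : H) :
    |∑ k, c k (E k g) - ∑ k, c k (E k g')| ≤ Fintype.card ι * (τ * ρ * x) * ‖g - g'‖ := by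
  rw [← sum_sub_distrib]
  calc |∑ k, (c k (E k g) - c k (E k g'))|
      ≤ ∑ k, |c k (E k g) - c k (E k g')| := abs_sum_le_sum_abs _ _
    _ ≤ ∑ _k : ι, τ * (ρ * ‖g - g'‖ * x) :=
      sum_le_sum fun k _ ↦ (hc k _ _).trans (mul_le_mul_of_nonneg_left (hE k g g') hτ)
    _ = Fintype.card ι * (τ * ρ * x) * ‖g - g'‖ := by
      rw [sum_const, card_univ, nsmul_eq_mul]; ring

-- an inequality because `n / α` is truncated division in `ℕ`
theorem one_div_mul_mul_natCast_div_le (m n α : ℕ) :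
    1 / ((m : ℝ) * n) * ((n / α : ℕ) : ℝ) ≤ 1 / ((m : ℝ) * α) := by
  rcases Nat.eq_zero_or_pos n with rfl | hn
  · simp only [Nat.zero_div, Nat.cast_zero, mul_zero]; positivity
  calc 1 / ((m : ℝ) * n) * ((n / α : ℕ) : ℝ) ≤ 1 / ((m : ℝ) * n) * ((n : ℝ) / α) := by
        gcongr; exact Nat.cast_div_le
    _ = 1 / ((m : ℝ) * α) := by
        have : (n : ℝ) ≠ 0 := by positivity
        field_simp

theorem function_stability_structural_regularization_general
    {H : Type*} [NormedAddCommGroup H] [InnerProductSpace ℝ H]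
    (m n α d : ℕ)
    (L : Fin (m * α) → H → ℝ)
    (hconv : ∀ j, ConvexOn ℝ univ (L j))
    (lam : ℝ) (hlam : 0 < lam)
    (i' : Fin (m * α)) (f f' : H)
    (hf : ∀ g : H,
      (1 / ((m : ℝ) * n)) * ∑ j, L j f + lam / 2 * ‖f‖ ^ 2
        ≤ (1 / ((m : ℝ) * n)) * ∑ j, L j g + lam / 2 * ‖g‖ ^ 2)
    (hf' : ∀ g : H,
      (1 / ((m : ℝ) * n)) * ∑ j ∈ univ.erase i', L j f' + lam / 2 * ‖f'‖ ^ 2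
        ≤ (1 / ((m : ℝ) * n)) * ∑ j ∈ univ.erase i', L j g + lam / 2 * ‖g‖ ^ 2)
    (τ ρ v xnorm : ℝ) (hτ : 0 ≤ τ) (hρ : 0 ≤ ρ) (hx : 0 ≤ xnorm)
    (c : Fin (n / α) → ℝ → ℝ) (E : Fin (n / α) → H → ℝ)
    (hdecomp : ∀ g : H, L i' g = ∑ k, c k (E k g))
    (hlip : ∀ (k : Fin (n / α)) (a b : ℝ), |c k a - c k b| ≤ τ * |a - b|)
    (hadm : ∀ (k : Fin (n / α)) (g g' : H),
      |E k g - E k g'| ≤ ρ * ‖g - g'‖ * xnorm)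
    (hxbound : xnorm ≤ (n : ℝ) * v * Real.sqrt d / α) :
    ∀ (Etest : H → ℝ) (xt : ℝ), 0 ≤ xt → xt ≤ (n : ℝ) * v * Real.sqrt d →
      (∀ g g' : H, |Etest g - Etest g'| ≤ ρ * ‖g - g'‖ * xt) →
      |Etest f - Etest f'|
        ≤ (d : ℝ) * τ * ρ ^ 2 * v ^ 2 * n ^ 2 / ((m : ℝ) * lam * α ^ 2) := by
  intro Etest xt hxt0 hxt hEtest
  set C := 1 / ((m : ℝ) * n)
  set K := C * (n / α : ℕ) * (τ * ρ * xnorm)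
  have hC : 0 ≤ C := by positivity
  have hK : 0 ≤ K := by positivity
  have hLip : ∀ g g', C * L i' g - C * L i' g' ≤ K * ‖g - g'‖ := fun g g' ↦ by
    have h := abs_sum_comp_sub_sum_comp_le c E hτ hlip hadm g g'
    rw [← hdecomp, ← hdecomp, Fintype.card_fin] at h
    have := mul_le_mul_of_nonneg_left ((le_abs_self _).trans h) hC
    simp only [K]
    linarith
  have hstab : ‖f - f'‖ ≤ K / lam := by
    refine norm_sub_le_of_isMinOn_regularized (R := fun g ↦ C * ∑ j ∈ univ.erase i', L j g)
      ((ConvexOn.finset_sum convex_univ _ fun j _ ↦ hconv j).smul hC) ((hconv i').smul hC)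
      hlam hK hLip (isMinOn_univ_iff.2 fun g ↦ ?_) (isMinOn_univ_iff.2 hf')
    have := hf g
    rw [← add_sum_erase _ _ (mem_univ i'), ← add_sum_erase _ _ (mem_univ i')] at this
    simp only [smul_eq_mul]
    linarith
  have hB : 0 ≤ (n : ℝ) * v * Real.sqrt d / α := hx.trans hxbound
  calc |Etest f - Etest f'| ≤ ρ * ‖f - f'‖ * xt := hEtest f f'
    _ ≤ ρ * (K / lam) * xt := by gcongr
    _ ≤ ρ * (1 / ((m : ℝ) * α) * (τ * ρ * ((n : ℝ) * v * Real.sqrt d / α)) / lam)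
          * ((n : ℝ) * v * Real.sqrt d) := by
        simp only [K]
        gcongr
        exact one_div_mul_mul_natCast_div_le m n α
    _ = (d : ℝ) * τ * ρ ^ 2 * v ^ 2 * n ^ 2 / ((m : ℝ) * lam * α ^ 2) := by
        have hd : Real.sqrt d * Real.sqrt d = d := Real.mul_self_sqrt (Nat.cast_nonneg d)
        linear_combination (τ * ρ ^ 2 * v ^ 2 * n ^ 2 / ((m : ℝ) * lam * α ^ 2)) * hd

/-- **Function stability vs. structural complexity regularization (Theorem 3 of
the stability analysis).**  Under L2 regularization with structural complexity
regularization strength `α`, removing one mini-sample changes the value of any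
ρ-admissible evaluation functional at a test input of norm at most `n v √d` by at
most `d τ ρ² v² n² / (m λ α²)`. -/
theorem function_stability_structural_regularization
    {H : Type*} [NormedAddCommGroup H] [InnerProductSpace ℝ H]
    (m n α d : ℕ) (hm : 0 < m) (hn : 0 < n) (hα : 0 < α) (hdvd : α ∣ n)
    (L : Fin (m * α) → H → ℝ)
    (hconv : ∀ j, ConvexOn ℝ univ (L j))
    (hdiff : ∀ j, Differentiable ℝ (L j))
    (lam : ℝ) (hlam : 0 < lam)
    (i' : Fin (m * α)) (f f' : H)
    (hf : ∀ g : H,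
      (1 / ((m : ℝ) * n)) * ∑ j, L j f + lam / 2 * ‖f‖ ^ 2
        ≤ (1 / ((m : ℝ) * n)) * ∑ j, L j g + lam / 2 * ‖g‖ ^ 2)
    (hf' : ∀ g : H,
      (1 / ((m : ℝ) * n)) * ∑ j ∈ univ.erase i', L j f' + lam / 2 * ‖f'‖ ^ 2
        ≤ (1 / ((m : ℝ) * n)) * ∑ j ∈ univ.erase i', L j g + lam / 2 * ‖g‖ ^ 2)
    (τ ρ v xnorm : ℝ) (hτ : 0 ≤ τ) (hρ : 0 ≤ ρ) (hv : 0 ≤ v) (hx : 0 ≤ xnorm)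
    (c : Fin (n / α) → ℝ → ℝ) (E : Fin (n / α) → H → ℝ)
    (hdecomp : ∀ g : H, L i' g = ∑ k, c k (E k g))
    (hlip : ∀ (k : Fin (n / α)) (a b : ℝ), |c k a - c k b| ≤ τ * |a - b|)
    (hadm : ∀ (k : Fin (n / α)) (g g' : H),
      |E k g - E k g'| ≤ ρ * ‖g - g'‖ * xnorm)
    (hxbound : xnorm ≤ (n : ℝ) * v * Real.sqrt d / α) :
    ∀ (Etest : H → ℝ) (xt : ℝ), 0 ≤ xt → xt ≤ (n : ℝ) * v * Real.sqrt d →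
      (∀ g g' : H, |Etest g - Etest g'| ≤ ρ * ‖g - g'‖ * xt) →
      |Etest f - Etest f'|
        ≤ (d : ℝ) * τ * ρ ^ 2 * v ^ 2 * n ^ 2 / ((m : ℝ) * lam * α ^ 2) :=
  function_stability_structural_regularization_general m n α d L hconv lam hlam i' f f' hf hf' τ ρ v
    xnorm hτ hρ hx c E hdecomp hlip hadm hxbound
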